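/- arXiv:2507.10569 — 3 statements merged into one kernel-verified Lean document; each statement's English description precedes it below -/
import Mathlib

section
/- For any restriction graph G on [n] and any two permutations σ, ρ satisfying G, the ℓ∞-distance d_ℓ(σ, ρ) = max_{1 ≤ i ≤ n} |σ(i) − ρ(i)| is at most max_{1 ≤ i ≤ n} (n − |R(i)| − |R⁻¹(i)| − 1). -/
/-- The ℓ∞-distance between two permutations satisfying a restriction graph is at
most `max_i (n - |R(i)| - |R⁻¹(i)| - 1)`. -/
theorem stmt3 {n : ℕ} (E : Fin n → Fin n → Prop) (σ ρ : Equiv.Perm (Fin n))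
    (hσ : ∀ u v, E u v → σ v < σ u) (hρ : ∀ u v, E u v → ρ v < ρ u) :
    (Finset.univ.sup fun i : Fin n => ((σ i : ℤ) - (ρ i : ℤ)).natAbs) ≤
      Finset.univ.sup fun i : Fin n =>
        n - Set.ncard {u : Fin n | u ≠ i ∧ Relation.TransGen E i u}
          - Set.ncard {u : Fin n | u ≠ i ∧ Relation.TransGen E u i} - 1 := by
  classical
  apply Finset.sup_le
  intro i _
  refine le_trans ?_ (Finset.le_sup (Finset.mem_univ i))
  set A := {u : Fin n | u ≠ i ∧ Relation.TransGen E i u} with hA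
  set B := {u : Fin n | u ≠ i ∧ Relation.TransGen E u i} with hB
  have key : ∀ τ : Equiv.Perm (Fin n), (∀ u v, E u v → τ v < τ u) →
      A.ncard ≤ (τ i : ℕ) ∧ (τ i : ℕ) + B.ncard ≤ n - 1 := by
    intro τ hτ
    have htr : ∀ u v, Relation.TransGen E u v → τ v < τ u := by
      intro u v h
      induction h with
      | single h => exact hτ _ _ h
      | tail _ h ih => exact lt_trans (hτ _ _ h) ih
    have h1 : τ '' A ⊆ Set.Iio (τ i) := by
      rintro x ⟨u, ⟨-, hu⟩, rfl⟩
      exact htr _ _ hu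
    have h2 : τ '' B ⊆ Set.Ioi (τ i) := by
      rintro x ⟨u, ⟨-, hu⟩, rfl⟩
      exact htr _ _ hu
    have c1 := Set.ncard_le_ncard h1 (Set.toFinite _)
    have c2 := Set.ncard_le_ncard h2 (Set.toFinite _)
    rw [Set.ncard_image_of_injective _ τ.injective, ← Finset.coe_Iio,
      Set.ncard_coe_finset, Fin.card_Iio] at c1
    rw [Set.ncard_image_of_injective _ τ.injective, ← Finset.coe_Ioi,
      Set.ncard_coe_finset, Fin.card_Ioi] at c2
    have := (τ i).isLt
    omega
  obtain ⟨s1, s2⟩ := key σ hσ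
  obtain ⟨r1, r2⟩ := key ρ hρ
  have := (σ i).isLt
  omega
end

section
/- For any 2-admissible restriction graph G on [n] (i.e., |P(G)| ≥ 2), there exist two permutations σ, ρ ∈ P(G) whose ℓ∞-distance equals max_{1 ≤ i ≤ n} (n − |R(i)| − |R⁻¹(i)| − 1). -/
/-!
Every `σ ∈ P(G)` puts the descendants `R(i)` below `i` and the ancestors `R⁻¹(i)` above it, so
`|R(i)| ≤ σ(i) ≤ n - 1 - |R⁻¹(i)|`, and two members of `P(G)` differ at `i` by at most
`n - |R(i)| - |R⁻¹(i)| - 1`. Both ends of this window are attained: starting from any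
`σ₀ ∈ P(G)`, lifting `i` with its ancestors to the top, or everything but `i` and its
descendants, while keeping the order of `σ₀` inside each block, stays in `P(G)`. Doing this at
an `i` maximising the bound gives the pair.
-/

open Function Equiv

namespace Tuple

theorem exists_perm_lt_iff_of_injective {n : ℕ} {α : Type*} [LinearOrder α] {f : Fin n → α}
    (hf : Injective f) : ∃ σ : Perm (Fin n), ∀ a b, σ a < σ b ↔ f a < f b := by
  have hmono : StrictMono (f ∘ sort f) :=
    (monotone_sort f).strictMono_of_injective (hf.comp (sort f).injective)
  refine ⟨(sort f).symm, fun a b => ?_⟩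
  simpa using (hmono.lt_iff_lt (a := (sort f).symm a) (b := (sort f).symm b)).symm

end Tuple

namespace Equiv.Perm

variable {n : ℕ}

theorem ncard_lt_apply (σ : Perm (Fin n)) (i : Fin n) :
    {u | σ u < σ i}.ncard = σ i := by
  rw [show {u | σ u < σ i} = σ ⁻¹' Set.Iio (σ i) from rfl,
    Set.ncard_preimage_of_injective_subset_range σ.injective (by simp), ← Finset.coe_Iio,
    Set.ncard_coe_finset, Fin.card_Iio]

theorem ncard_apply_lt (σ : Perm (Fin n)) (i : Fin n) :
    {u | σ i < σ u}.ncard = n - 1 - σ i := by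
  rw [show {u | σ i < σ u} = σ ⁻¹' Set.Ioi (σ i) from rfl,
    Set.ncard_preimage_of_injective_subset_range σ.injective (by simp), ← Finset.coe_Ioi,
    Set.ncard_coe_finset, Fin.card_Ioi]

end Equiv.Perm

/-- `σ ∈ P(G)`; edges point downwards. -/
def IsLinearExtension {n : ℕ} (E : Fin n → Fin n → Prop) (σ : Perm (Fin n)) : Prop :=
  ∀ u v, E u v → σ v < σ u

namespace IsLinearExtension

variable {n : ℕ} {E : Fin n → Fin n → Prop} {σ ρ : Perm (Fin n)}

theorem lt_of_transGen (hσ : IsLinearExtension E σ) {a b : Fin n}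
    (h : Relation.TransGen E a b) : σ b < σ a := by
  induction h with
  | single h => exact hσ _ _ h
  | tail _ h ih => exact (hσ _ _ h).trans ih

theorem ncard_descendants_le (hσ : IsLinearExtension E σ) (j : Fin n) :
    {u | u ≠ j ∧ Relation.TransGen E j u}.ncard ≤ σ j := by
  rw [← σ.ncard_lt_apply j]
  exact Set.ncard_le_ncard (fun u hu => hσ.lt_of_transGen hu.2) (Set.toFinite _)

theorem ncard_ancestors_le (hσ : IsLinearExtension E σ) (j : Fin n) :
    {u | u ≠ j ∧ Relation.TransGen E u j}.ncard ≤ n - 1 - σ j := by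
  rw [← σ.ncard_apply_lt j]
  exact Set.ncard_le_ncard (fun u hu => hσ.lt_of_transGen hu.2) (Set.toFinite _)

theorem natAbs_sub_le (hσ : IsLinearExtension E σ) (hρ : IsLinearExtension E ρ) (j : Fin n) :
    ((σ j : ℤ) - ρ j).natAbs ≤ n - {u | u ≠ j ∧ Relation.TransGen E j u}.ncard
      - {u | u ≠ j ∧ Relation.TransGen E u j}.ncard - 1 := by
  have := hσ.ncard_descendants_le j
  have := hσ.ncard_ancestors_le j
  have := hρ.ncard_descendants_le j
  have := hρ.ncard_ancestors_le j
  have := (σ j).2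
  have := (ρ j).2
  omega

theorem exists_lift (hσ : IsLinearExtension E σ) (S : Set (Fin n))
    (hS : ∀ u v, E u v → v ∈ S → u ∈ S) :
    ∃ τ, IsLinearExtension E τ ∧
      ∀ a b, τ a < τ b ↔ (a ∉ S ∧ b ∈ S) ∨ ((a ∈ S ↔ b ∈ S) ∧ σ a < σ b) := by
  classical
  let key : Fin n → ℕ := fun u => (if u ∈ S then n else 0) + σ u
  have hkey : ∀ a b, key a < key b ↔ (a ∉ S ∧ b ∈ S) ∨ ((a ∈ S ↔ b ∈ S) ∧ σ a < σ b) := by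
    intro a b
    have := (σ a).2
    have := (σ b).2
    simp only [key, Fin.lt_def]
    by_cases ha : a ∈ S <;> by_cases hb : b ∈ S <;> simp [ha, hb] <;> omega
  have hinj : Injective key := fun a b hab => by
    have hab' := (hkey a b).not.mp hab.not_lt
    have hba := (hkey b a).not.mp hab.symm.not_lt
    by_contra hne
    rcases lt_or_gt_of_ne (σ.injective.ne hne) with h | h <;> tauto
  obtain ⟨τ, hτ⟩ := Tuple.exists_perm_lt_iff_of_injective hinj
  refine ⟨τ, fun u v huv => ?_, fun a b => (hτ a b).trans (hkey a b)⟩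
  rw [hτ, hkey]
  by_cases hv : v ∈ S
  · exact Or.inr ⟨iff_of_true hv (hS u v huv hv), hσ u v huv⟩
  · by_cases hu : u ∈ S
    · exact Or.inl ⟨hv, hu⟩
    · exact Or.inr ⟨iff_of_false hv hu, hσ u v huv⟩

theorem exists_ancestors_eq (hσ : IsLinearExtension E σ) (i : Fin n) :
    ∃ τ, IsLinearExtension E τ ∧
      {u | τ i < τ u} = {u | u ≠ i ∧ Relation.TransGen E u i} := by
  obtain ⟨τ, hτE, hτ⟩ := hσ.exists_lift {u | u = i ∨ Relation.TransGen E u i}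
    fun u v huv hv => Or.inr (hv.elim (· ▸ .single huv) (.head huv))
  refine ⟨τ, hτE, Set.ext fun u => ?_⟩
  simp only [Set.mem_ofPred_eq, hτ, true_or, not_true_eq_false, false_and, false_or,
    true_iff]
  constructor
  · rintro ⟨hu | hu, hlt⟩
    · exact absurd hlt (by rw [hu]; exact lt_irrefl _)
    · exact ⟨fun h => (h ▸ hlt).false, hu⟩
  · exact fun ⟨_, hu⟩ => ⟨Or.inr hu, hσ.lt_of_transGen hu⟩

theorem exists_descendants_eq (hσ : IsLinearExtension E σ) (i : Fin n) :
    ∃ τ, IsLinearExtension E τ ∧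
      {u | τ u < τ i} = {u | u ≠ i ∧ Relation.TransGen E i u} := by
  obtain ⟨τ, hτE, hτ⟩ := hσ.exists_lift {u | ¬(u = i ∨ Relation.TransGen E i u)}
    fun u v huv hv hu => hv (Or.inr (hu.elim (· ▸ .single huv) (.tail · huv)))
  refine ⟨τ, hτE, Set.ext fun u => ?_⟩
  simp only [Set.mem_ofPred_eq, hτ, not_not, true_or, not_true_eq_false, and_false, false_or,
    iff_false]
  constructor
  · rintro ⟨hu | hu, hlt⟩
    · exact absurd hlt (by rw [hu]; exact lt_irrefl _)
    · exact ⟨fun h => (h ▸ hlt).false, hu⟩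
  · exact fun ⟨_, hu⟩ => ⟨Or.inr hu, hσ.lt_of_transGen hu⟩

end IsLinearExtension

/-- For any 2-admissible restriction graph `G` on `[n]` there are two permutations
satisfying `G` whose ℓ∞-distance equals `max_i (n - |R(i)| - |R⁻¹(i)| - 1)`. -/
theorem stmt4 {n : ℕ} (E : Fin n → Fin n → Prop)
    (h2 : ∃ σ ρ : Equiv.Perm (Fin n), σ ≠ ρ ∧
      (∀ u v, E u v → σ v < σ u) ∧ (∀ u v, E u v → ρ v < ρ u)) :
    ∃ σ ρ : Equiv.Perm (Fin n),
      (∀ u v, E u v → σ v < σ u) ∧ (∀ u v, E u v → ρ v < ρ u) ∧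
      (Finset.univ.sup fun i : Fin n => ((σ i : ℤ) - (ρ i : ℤ)).natAbs) =
        Finset.univ.sup fun i : Fin n =>
          n - Set.ncard {u : Fin n | u ≠ i ∧ Relation.TransGen E i u}
            - Set.ncard {u : Fin n | u ≠ i ∧ Relation.TransGen E u i} - 1 := by
  obtain ⟨σ₀, -, -, hσ₀, -⟩ := h2
  rcases isEmpty_or_nonempty (Fin n) with hn | hn
  · exact ⟨σ₀, σ₀, hσ₀, hσ₀, by simp [Finset.univ_eq_empty]⟩
  obtain ⟨i, -, hi⟩ := Finset.exists_mem_eq_sup Finset.univ Finset.univ_nonempty fun i : Fin n =>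
    n - Set.ncard {u : Fin n | u ≠ i ∧ Relation.TransGen E i u}
      - Set.ncard {u : Fin n | u ≠ i ∧ Relation.TransGen E u i} - 1
  obtain ⟨σ, hσ, hσi⟩ := IsLinearExtension.exists_ancestors_eq hσ₀ i
  obtain ⟨ρ, hρ, hρi⟩ := IsLinearExtension.exists_descendants_eq hσ₀ i
  refine ⟨σ, ρ, hσ, hρ, le_antisymm
    (Finset.sup_mono_fun fun j _ => hσ.natAbs_sub_le hρ j)
    (hi ▸ Finset.le_sup_of_le (Finset.mem_univ i) ?_)⟩
  have hσ_top := σ.ncard_apply_lt i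
  have hρ_bot := ρ.ncard_lt_apply i
  rw [hσi] at hσ_top
  rw [hρi] at hρ_bot
  have hσ_bot := hσ.ncard_descendants_le i
  have hσ_lt := (σ i).2
  omega
end

section
/- If there exist permutations σ, ρ satisfying a restriction graph G such that their Kendall-Tau distance equals the number of incomparable pairs of the reachability poset P of G, then P has order dimension at most 2; specifically, the two linear orders induced by σ and ρ (i ≤_σ j iff σ(i) < σ(j)) intersect exactly in the reverse of the reachability relation on comparable pairs, giving a realizer of size 2. -/
lemma transGen_lt {n : ℕ} {E : Fin n → Fin n → Prop} (σ : Equiv.Perm (Fin n))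
    (hσ : ∀ u v, E u v → σ v < σ u) {u v : Fin n} (h : Relation.TransGen E u v) :
    σ v < σ u := by
  induction h with
  | single h => exact hσ _ _ h
  | tail _ h ih => exact lt_trans (hσ _ _ h) ih

lemma linPullback {n : ℕ} (f : Equiv.Perm (Fin n)) :
    IsLinearOrder (Fin n) (fun a b => f b ≤ f a) := by
  have h1 : IsPartialOrder (Fin n) (fun a b => f b ≤ f a) :=
    { refl := fun a => le_refl _
      trans := fun a b c h1 h2 => le_trans h2 h1
      antisymm := fun a b h1 h2 => f.injective (le_antisymm h2 h1) }
  have h2 : IsTotal (Fin n) (fun a b => f b ≤ f a) := ⟨fun a b => le_total _ _⟩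
  exact { }

/-- If two permutations satisfying a restriction graph `G` achieve Kendall-Tau
distance equal to the number of incomparable pairs of the reachability poset `P`,
then `P` has order dimension at most 2: the two linear orders induced by `σ` and
`ρ` intersect exactly in the reverse of the reachability order, giving a realizer
of size 2. -/
theorem stmt11 {n : ℕ} (E : Fin n → Fin n → Prop) (σ ρ : Equiv.Perm (Fin n))
    (hσ : ∀ u v, E u v → σ v < σ u) (hρ : ∀ u v, E u v → ρ v < ρ u)
    (hmax : Set.ncard {p : Fin n × Fin n | p.1 < p.2 ∧
        ((σ p.1 : ℤ) - (σ p.2 : ℤ)) * ((ρ p.1 : ℤ) - (ρ p.2 : ℤ)) < 0} =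
      Set.ncard {p : Fin n × Fin n | p.1 < p.2 ∧
        ¬ Relation.TransGen E p.1 p.2 ∧ ¬ Relation.TransGen E p.2 p.1}) :
    (∀ i j : Fin n, (σ i ≤ σ j ∧ ρ i ≤ ρ j) ↔ (j = i ∨ Relation.TransGen E j i)) ∧
    (∃ r₁ r₂ : Fin n → Fin n → Prop,
      IsLinearOrder (Fin n) r₁ ∧ IsLinearOrder (Fin n) r₂ ∧
      ∀ a b : Fin n, (a = b ∨ Relation.TransGen E a b) ↔ (r₁ a b ∧ r₂ a b)) := by
  set D : Set (Fin n × Fin n) := {p : Fin n × Fin n | p.1 < p.2 ∧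
      ((σ p.1 : ℤ) - (σ p.2 : ℤ)) * ((ρ p.1 : ℤ) - (ρ p.2 : ℤ)) < 0} with hD
  set I : Set (Fin n × Fin n) := {p : Fin n × Fin n | p.1 < p.2 ∧
      ¬ Relation.TransGen E p.1 p.2 ∧ ¬ Relation.TransGen E p.2 p.1} with hI
  have hsub : D ⊆ I := by
    rintro ⟨a, b⟩ ⟨hab, hprod⟩
    refine ⟨hab, ?_, ?_⟩
    · intro h
      have h1 := transGen_lt σ hσ h
      have h2 := transGen_lt ρ hρ h
      have h1' : (σ b : ℤ) < (σ a : ℤ) := by exact_mod_cast h1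
      have h2' : (ρ b : ℤ) < (ρ a : ℤ) := by exact_mod_cast h2
      nlinarith
    · intro h
      have h1 := transGen_lt σ hσ h
      have h2 := transGen_lt ρ hρ h
      have h1' : (σ a : ℤ) < (σ b : ℤ) := by exact_mod_cast h1
      have h2' : (ρ a : ℤ) < (ρ b : ℤ) := by exact_mod_cast h2
      nlinarith
  have heq : D = I := Set.eq_of_subset_of_ncard_le hsub hmax.ge (Set.toFinite I)
  have key : ∀ i j : Fin n, (σ i ≤ σ j ∧ ρ i ≤ ρ j) ↔ (j = i ∨ Relation.TransGen E j i) := by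
    intro i j
    constructor
    · rintro ⟨hs, hr⟩
      by_cases hij : i = j
      · exact Or.inl hij.symm
      · right
        have hsi : σ i < σ j := lt_of_le_of_ne hs (fun h => hij (σ.injective h))
        have hri : ρ i < ρ j := lt_of_le_of_ne hr (fun h => hij (ρ.injective h))
        have hs' : (σ i : ℤ) < (σ j : ℤ) := by exact_mod_cast hsi
        have hr' : (ρ i : ℤ) < (ρ j : ℤ) := by exact_mod_cast hri
        rcases lt_or_gt_of_ne hij with hlt | hgt
        · have hnotD : (i, j) ∉ D := by
            rintro ⟨-, hprod⟩
            simp only at hprod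
            nlinarith
          rw [heq] at hnotD
          have hcomp : Relation.TransGen E i j ∨ Relation.TransGen E j i := by
            by_contra hc
            push_neg at hc
            exact hnotD ⟨hlt, hc.1, hc.2⟩
          rcases hcomp with hc | hc
          · exact absurd (transGen_lt σ hσ hc) hsi.asymm
          · exact hc
        · have hnotD : (j, i) ∉ D := by
            rintro ⟨-, hprod⟩
            simp only at hprod
            nlinarith
          rw [heq] at hnotD
          have hcomp : Relation.TransGen E j i ∨ Relation.TransGen E i j := by
            by_contra hc
            push_neg at hc
            exact hnotD ⟨hgt, hc.1, hc.2⟩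
          rcases hcomp with hc | hc
          · exact hc
          · exact absurd (transGen_lt σ hσ hc) hsi.asymm
    · rintro (rfl | h)
      · exact ⟨le_refl _, le_refl _⟩
      · exact ⟨(transGen_lt σ hσ h).le, (transGen_lt ρ hρ h).le⟩
  refine ⟨key, fun a b => σ b ≤ σ a, fun a b => ρ b ≤ ρ a, ?_, ?_, ?_⟩
  · exact linPullback σ
  · exact linPullback ρ
  · intro a b
    rw [← key b a]
end
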